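/- arXiv:2407.08963 — 6 statements merged into one kernel-verified Lean document; each statement's English description precedes it below -/
import Mathlib

section
/- In the graph G on vertices {v1,...,v8} with edges {v1v5, v1v6, v2v5, v2v6, v2v7, v2v8, v4v7, v4v8}, for every vertex cover V of size at most 4, the Hamming distance between the characteristic vectors of V1 = {v1,v2,v7,v8} and V is at most 6, with equality if and only if V = {v2,v4,v5,v6}. -/
/-! Since `H(V1, C) = |V1 ∆ C| = |V1| + |C| - 2|V1 ∩ C| ≤ 8 - 2|V1 ∩ C|` and every cover meets `V1`
(it contains `v2` or else `v7`), `H ≤ 6`. Equality forces `|C| = 4` and `V1 ∩ C` to be a single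
vertex. That vertex is `v2`, since a cover avoiding `v2` contains both `v7` and `v8`. So
`v1, v7 ∉ C`, and the edges at them force `v5, v6` and `v4` into `C`, so `C = {v2, v4, v5, v6}`. -/

/-- The edges of the graph `G` from the paper, on vertices `0,…,7` standing for `v1,…,v8`. -/
def edges : List (Fin 8 × Fin 8) :=
  [(0, 4), (0, 5), (1, 4), (1, 5), (1, 6), (1, 7), (3, 6), (3, 7)]

/-- `C` is a vertex cover of `G`: every edge has an endpoint in `C`. -/
def IsCover (C : Finset (Fin 8)) : Prop := ∀ e ∈ edges, e.1 ∈ C ∨ e.2 ∈ C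

/-- `V1 = {v1, v2, v7, v8}`. -/
def V1 : Finset (Fin 8) := {0, 1, 6, 7}
/-- `V2 = {v2, v4, v5, v6}`. -/
def V2 : Finset (Fin 8) := {1, 3, 4, 5}
/-- `V3 = {v1, v2, v3, v4}`. -/
def V3 : Finset (Fin 8) := {0, 1, 2, 3}
/-- `V4 = {v5, v6, v7, v8}`. -/
def V4 : Finset (Fin 8) := {4, 5, 6, 7}

/-- The characteristic bit vector of a set of vertices. -/
def chi (C : Finset (Fin 8)) : Fin 8 → Bool := fun i => decide (i ∈ C)

open Finset

theorem Finset.card_symmDiff_add_two_mul_card_inter {α : Type*} [DecidableEq α] (A B : Finset α) :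
    #(symmDiff A B) + 2 * #(A ∩ B) = #A + #B := by
  rw [symmDiff_eq_sup_sdiff_inf, sup_eq_union, inf_eq_inter,
    card_sdiff_of_subset inter_subset_union, ← card_union_add_card_inter]
  have := card_le_card (inter_subset_union (s := A) (t := B))
  omega

theorem hammingDist_decide_mem {α : Type*} [Fintype α] [DecidableEq α] (A B : Finset α) :
    hammingDist (fun i => decide (i ∈ A)) (fun i => decide (i ∈ B)) = #(symmDiff A B) := by
  rw [hammingDist]
  congr 1
  ext i
  simp only [ne_eq, decide_eq_decide, mem_filter, mem_univ, true_and, mem_symmDiff]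
  tauto

theorem isCover_iff (C : Finset (Fin 8)) :
    IsCover C ↔ (0 ∈ C ∨ 4 ∈ C) ∧ (0 ∈ C ∨ 5 ∈ C) ∧ (1 ∈ C ∨ 4 ∈ C) ∧ (1 ∈ C ∨ 5 ∈ C) ∧
      (1 ∈ C ∨ 6 ∈ C) ∧ (1 ∈ C ∨ 7 ∈ C) ∧ (3 ∈ C ∨ 6 ∈ C) ∧ (3 ∈ C ∨ 7 ∈ C) := by
  simp [IsCover, edges]

theorem IsCover.inter_V1_nonempty {C : Finset (Fin 8)} (hC : IsCover C) : (V1 ∩ C).Nonempty := by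
  obtain ⟨-, -, -, -, h16, -⟩ := (isCover_iff C).1 hC
  rcases h16 with h | h
  exacts [⟨1, by simp [V1, h]⟩, ⟨6, by simp [V1, h]⟩]

theorem IsCover.eq_V2 {C : Finset (Fin 8)} (hC : IsCover C) (hcard : #C ≤ 4)
    (hV1 : #(V1 ∩ C) ≤ 1) : C = V2 := by
  obtain ⟨h04, h05, -, -, h16, h17, h36, -⟩ := (isCover_iff C).1 hC
  have hone := card_le_one.1 hV1
  have h1 : 1 ∈ C := by
    by_contra h1
    exact absurd (hone 6 (by simp [V1, h16.resolve_left h1]) 7 (by simp [V1, h17.resolve_left h1]))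
      (by decide)
  have h0 : 0 ∉ C := fun h0 => absurd (hone 0 (by simp [V1, h0]) 1 (by simp [V1, h1])) (by decide)
  have h6 : 6 ∉ C := fun h6 => absurd (hone 1 (by simp [V1, h1]) 6 (by simp [V1, h6])) (by decide)
  have hsub : V2 ⊆ C := by
    simp only [V2, insert_subset_iff, singleton_subset_iff]
    exact ⟨h1, h36.resolve_right h6, h04.resolve_left h0, h05.resolve_left h0⟩
  exact (eq_of_subset_of_card_le hsub (by simpa [V2] using hcard)).symm

/-- For every vertex cover `V` of `G` of size at most 4, `H(V1, V) ≤ 6`, with equality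
iff `V = V2 = {v2, v4, v5, v6}`. -/
theorem hamming_from_V1_le_six (C : Finset (Fin 8)) (hC : IsCover C) (hcard : C.card ≤ 4) :
    hammingDist (chi V1) (chi C) ≤ 6 ∧ (hammingDist (chi V1) (chi C) = 6 ↔ C = V2) := by
  have hdist : hammingDist (chi V1) (chi C) + 2 * #(V1 ∩ C) = 4 + #C := by
    unfold chi
    rw [hammingDist_decide_mem, card_symmDiff_add_two_mul_card_inter]
    rfl
  have hmeet := hC.inter_V1_nonempty.card_pos
  refine ⟨by omega, fun h6 => hC.eq_V2 hcard (by omega), ?_⟩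
  rintro rfl
  decide
end

section
/- In the graph G with edges {v1v5, v1v6, v2v5, v2v6, v2v7, v2v8, v4v7, v4v8}, the population (V1, V2) = ({v1,v2,v7,v8}, {v2,v4,v5,v6}) is a strict local optimum for Hamming-distance diversity among size-2 populations of vertex covers of size at most 4: replacing either individual by any different vertex cover of size at most 4 strictly decreases the Hamming distance between the two individuals. -/
/-!
The graph is the union of the complete bipartite graphs between `{v1, v2}` and `{v5, v6}` and
between `{v2, v4}` and `{v7, v8}`, and a vertex cover of `K_{S,T}` contains `S` or `T`. Hence a
cover that meets `V2` in at most one vertex contains `{v1, v2} ∪ {v7, v8} = V1`, and symmetrically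
a cover meeting `V1` in at most one vertex contains `V2`. Every other cover `C` of size at most `4`
shares at least two vertices with the fixed individual, so its Hamming distance to it is
`#C + 4 - 2 * #(C ∩ V) ≤ 4 < 6`.
-/

open Finset

theorem hammingDist_decide_mem_add_two_mul_card_inter {α : Type*} [Fintype α] [DecidableEq α]
    (C D : Finset α) :
    hammingDist (fun i => decide (i ∈ C)) (fun i => decide (i ∈ D)) + 2 * #(C ∩ D) =
      #C + #D := by
  have hdist : hammingDist (fun i => decide (i ∈ C)) (fun i => decide (i ∈ D)) =
      #((C ∪ D) \ (C ∩ D)) := by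
    unfold hammingDist
    congr 1
    ext i
    simp only [ne_eq, decide_eq_decide, mem_filter, mem_univ, true_and, mem_sdiff, mem_union,
      mem_inter]
    tauto
  have hsub : C ∩ D ⊆ C ∪ D := inter_subset_left.trans subset_union_left
  rw [hdist, card_sdiff_of_subset hsub]
  have := card_union_add_card_inter C D
  have := card_le_card hsub
  omega

theorem hammingDist_chi_le_four {C D : Finset (Fin 8)} (hC : #C ≤ 4) (hD : #D ≤ 4)
    (hCD : 2 ≤ #(C ∩ D)) : hammingDist (chi C) (chi D) ≤ 4 := by
  have := hammingDist_decide_mem_add_two_mul_card_inter C D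
  unfold chi
  omega

theorem Finset.subset_or_subset_of_forall_mem_or {α : Type*} {C S T : Finset α}
    (h : ∀ s ∈ S, ∀ t ∈ T, s ∈ C ∨ t ∈ C) : S ⊆ C ∨ T ⊆ C := by
  by_contra! hST
  obtain ⟨⟨s, hs, hsC⟩, ⟨t, ht, htC⟩⟩ := And.imp not_subset.mp not_subset.mp hST
  exact (h s hs t ht).elim hsC htC

theorem Finset.not_subset_of_card_inter_lt {α : Type*} [DecidableEq α] {B C S : Finset α}
    (hSB : S ⊆ B) (hcard : #(C ∩ B) < #S) : ¬ S ⊆ C := fun hSC =>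
  (card_le_card (subset_inter hSC hSB)).not_gt hcard

theorem IsCover.subset_or_subset {C : Finset (Fin 8)} (h : IsCover C) :
    ({0, 1} ⊆ C ∨ {4, 5} ⊆ C) ∧ ({1, 3} ⊆ C ∨ {6, 7} ⊆ C) := by
  constructor <;> apply subset_or_subset_of_forall_mem_or <;>
    · intro s hs t ht
      apply h (s, t)
      fin_cases hs <;> fin_cases ht <;> decide

theorem IsCover.eq_V1_of_card_inter_V2_le_one {C : Finset (Fin 8)} (h : IsCover C)
    (hC : #C ≤ 4) (hV2 : #(C ∩ V2) ≤ 1) : C = V1 := by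
  have avoid : ∀ S ⊆ V2, #S = 2 → ¬ S ⊆ C := fun S hS hS2 =>
    not_subset_of_card_inter_lt hS (by omega)
  obtain ⟨h01 | h45, h13 | h67⟩ := h.subset_or_subset
  · exact absurd h13 (avoid _ (by decide) rfl)
  · rw [show V1 = {0, 1} ∪ {6, 7} by decide]
    exact (eq_of_subset_of_card_le (union_subset h01 h67) (hC.trans_eq rfl)).symm
  all_goals exact absurd h45 (avoid _ (by decide) rfl)

theorem IsCover.eq_V2_of_card_inter_V1_le_one {C : Finset (Fin 8)} (h : IsCover C)
    (hC : #C ≤ 4) (hV1 : #(C ∩ V1) ≤ 1) : C = V2 := by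
  have avoid : ∀ S ⊆ V1, #S = 2 → ¬ S ⊆ C := fun S hS hS2 =>
    not_subset_of_card_inter_lt hS (by omega)
  obtain ⟨h01 | h45, h13 | h67⟩ := h.subset_or_subset
  any_goals exact absurd h01 (avoid _ (by decide) rfl)
  · rw [show V2 = {4, 5} ∪ {1, 3} by decide]
    exact (eq_of_subset_of_card_le (union_subset h45 h13) (hC.trans_eq rfl)).symm
  · exact absurd h67 (avoid _ (by decide) rfl)

/-- The population `(V1, V2)` is a strict local optimum for Hamming-distance diversity
among size-2 populations of vertex covers of size at most 4: replacing either individual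
by any different vertex cover of size at most 4 strictly decreases the Hamming distance
between the two individuals (which is 6 for `(V1, V2)`). -/
theorem local_optimum_pair :
    hammingDist (chi V1) (chi V2) = 6 ∧
    (∀ C : Finset (Fin 8), IsCover C → C.card ≤ 4 → C ≠ V1 →
      hammingDist (chi C) (chi V2) < hammingDist (chi V1) (chi V2)) ∧
    (∀ C : Finset (Fin 8), IsCover C → C.card ≤ 4 → C ≠ V2 →
      hammingDist (chi V1) (chi C) < hammingDist (chi V1) (chi V2)) := by
  have hV1V2 : hammingDist (chi V1) (chi V2) = 6 := by decide
  refine ⟨hV1V2, fun C hcov hC hne => ?_, fun C hcov hC hne => ?_⟩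
  · have hinter : 2 ≤ #(C ∩ V2) := by
      by_contra! h
      exact hne (hcov.eq_V1_of_card_inter_V2_le_one hC (by omega))
    have := hammingDist_chi_le_four hC le_rfl hinter
    omega
  · have hinter : 2 ≤ #(V1 ∩ C) := by
      by_contra! h
      exact hne (hcov.eq_V2_of_card_inter_V1_le_one hC (by rw [inter_comm]; omega))
    have := hammingDist_chi_le_four le_rfl hC hinter
    omega
end

section
/- Let μ ≥ 4 be even, ν = μ/2 - 1, and let P be the population with one copy each of V1 = {v1,v2,v7,v8} and V2 = {v2,v4,v5,v6}, and ν copies each of V3 = {v1,v2,v3,v4} and V4 = {v5,v6,v7,v8}, viewed as characteristic vectors in {0,1}^8 of vertex covers of the graph G with edges {v1v5, v1v6, v2v5, v2v6, v2v7, v2v8, v4v7, v4v8}. Then replacing any single individual of P by any vertex cover of G of size at most 4 different from that individual strictly decreases the total Hamming distance of the population. -/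
/-- The population with one copy each of `V1`, `V2` and `ν` copies each of `V3`, `V4`,
as a multiset of bit strings in `{0,1}^8`. -/
def pop (ν : ℕ) : Multiset (Fin 8 → Bool) :=
  {chi V1, chi V2} + Multiset.replicate ν (chi V3) + Multiset.replicate ν (chi V4)

/-- `n_i`: the number of members of the population `P` with a one-bit at position `i`. -/
def ones (P : Multiset (Fin 8 → Bool)) (i : Fin 8) : ℕ := P.countP (fun x => x i = true)

/-- The total Hamming distance of a population `P`, computed as `∑ i, n_i (|P| - n_i)`. -/
def totalHD (P : Multiset (Fin 8 → Bool)) : ℕ :=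
  ∑ i : Fin 8, ones P i * (Multiset.card P - ones P i)

/-!
In a population of size `2m`, a column with `n` ones contributes `n (2m - n) = m² - (n - m)²`,
so the total Hamming distance is `8m² - ∑ᵢ (nᵢ - m)²`. In `P`, the `ν` copies of the
complementary sets `V3`, `V4` put `ν` ones in every column and `m = ν + 1`, so the deviations
`nᵢ - m = [i ∈ V1] + [i ∈ V2] - 1` do not depend on `ν`; replacing `v` by `C` adds
`[i ∈ C] - vᵢ` to them. The claim thus reduces to a single finite check, independent of `μ`:
the sum of squared deviations strictly grows, for every vertex cover `C` with `|C| ≤ 4`.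
-/

open Multiset

section Population

variable (P : Multiset (Fin 8 → Bool))

lemma ones_cons (x : Fin 8 → Bool) (i : Fin 8) : ones (x ::ₘ P) i = ones P i + (x i).toNat := by
  cases h : x i <;> simp [ones, h]

lemma ones_add (Q : Multiset (Fin 8 → Bool)) (i : Fin 8) :
    ones (P + Q) i = ones P i + ones Q i :=
  countP_add _ _ _

lemma ones_replicate (n : ℕ) (x : Fin 8 → Bool) (i : Fin 8) :
    ones (replicate n x) i = n * (x i).toNat := by
  induction n with
  | zero => simp [ones]
  | succ n ih => rw [replicate_succ, ones_cons, ih]; ring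

lemma ones_replace {v : Fin 8 → Bool} (hv : v ∈ P) (x : Fin 8 → Bool) (i : Fin 8) :
    (ones (x ::ₘ P.erase v) i : ℤ) = ones P i - (v i).toNat + (x i).toNat := by
  have h := ones_cons (P.erase v) v i
  rw [cons_erase hv] at h
  rw [ones_cons, h]
  push_cast
  ring

lemma card_replace {v : Fin 8 → Bool} (hv : v ∈ P) (x : Fin 8 → Bool) :
    card (x ::ₘ P.erase v) = card P := by
  rw [card_cons, card_erase_add_one hv]

lemma totalHD_eq_of_card_eq {m : ℕ} (hP : card P = 2 * m) :
    (totalHD P : ℤ) = 8 * m ^ 2 - ∑ i, ((ones P i : ℤ) - m) ^ 2 := by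
  have hle : ∀ i, ones P i ≤ 2 * m := fun i => hP ▸ countP_le_card _ _
  simp only [totalHD, hP]
  push_cast [Nat.cast_sub (hle _)]
  rw [Finset.sum_congr rfl fun i _ => show
      (ones P i : ℤ) * (2 * m - ones P i) = m ^ 2 - ((ones P i : ℤ) - m) ^ 2 by ring]
  simp [Finset.sum_sub_distrib]

end Population

lemma card_pop (ν : ℕ) : card (pop ν) = 2 * (ν + 1) := by
  simp [pop]
  ring

lemma mem_pop {ν : ℕ} {v : Fin 8 → Bool} (hv : v ∈ pop ν) :
    v ∈ [chi V1, chi V2, chi V3, chi V4] := by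
  simp only [pop, insert_eq_cons, mem_add, mem_cons, mem_singleton, mem_replicate] at hv
  simp only [List.mem_cons, List.not_mem_nil]
  tauto

lemma ones_pop_sub (ν : ℕ) (i : Fin 8) :
    (ones (pop ν) i : ℤ) - (ν + 1) = (chi V1 i).toNat + (chi V2 i).toNat - 1 := by
  have hV34 : ((chi V3 i).toNat : ℤ) + (chi V4 i).toNat = 1 := by
    fin_cases i <;> rfl
  simp only [pop, insert_eq_cons, ← cons_zero, ones_add, ones_cons, ones_replicate]
  simp only [ones, countP_zero]
  push_cast
  linear_combination (ν : ℤ) * hV34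

set_option maxRecDepth 10000 in
lemma sum_sq_deviation_lt : ∀ v ∈ [chi V1, chi V2, chi V3, chi V4], ∀ C : Finset (Fin 8),
    IsCover C → C.card ≤ 4 → chi C ≠ v →
      ∑ i, ((chi V1 i).toNat + (chi V2 i).toNat - 1 : ℤ) ^ 2 <
        ∑ i, ((chi V1 i).toNat + (chi V2 i).toNat - 1 - (v i).toNat + (chi C i).toNat : ℤ) ^ 2 := by
  unfold IsCover
  decide

theorem totalHD_replace_lt (ν : ℕ) :
    ∀ v ∈ pop ν, ∀ C : Finset (Fin 8), IsCover C → C.card ≤ 4 → chi C ≠ v →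
      totalHD (chi C ::ₘ (pop ν).erase v) < totalHD (pop ν) := by
  intro v hv C hC hcard hne
  have hcard' := (card_replace _ hv (chi C)).trans (card_pop ν)
  rw [← Int.ofNat_lt, totalHD_eq_of_card_eq _ hcard', totalHD_eq_of_card_eq _ (card_pop ν)]
  push_cast
  have hdev : ∀ i, (ones (chi C ::ₘ (pop ν).erase v) i : ℤ) - (ν + 1) =
      (ones (pop ν) i - (ν + 1)) - (v i).toNat + (chi C i).toNat := fun i => by
    rw [ones_replace _ hv]
    ring
  simp only [hdev, ones_pop_sub]
  linarith [sum_sq_deviation_lt v (mem_pop hv) C hC hcard hne]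

theorem local_optimum_population_general (μ : ℕ) :
    ∀ v ∈ pop (μ / 2 - 1), ∀ C : Finset (Fin 8), IsCover C → C.card ≤ 4 → chi C ≠ v →
      totalHD (chi C ::ₘ (pop (μ / 2 - 1)).erase v) < totalHD (pop (μ / 2 - 1)) :=
  totalHD_replace_lt _

/-- For even `μ ≥ 4`, replacing any single individual of the population (one copy each of
`V1`, `V2`, and `μ/2 - 1` copies each of `V3`, `V4`) by any vertex cover of `G` of size at
most 4 different from that individual strictly decreases the total Hamming distance. -/
theorem local_optimum_population (μ : ℕ) (hμ : 4 ≤ μ) (heven : Even μ) :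
    ∀ v ∈ pop (μ / 2 - 1), ∀ C : Finset (Fin 8), IsCover C → C.card ≤ 4 → chi C ≠ v →
      totalHD (chi C ::ₘ (pop (μ / 2 - 1)).erase v) < totalHD (pop (μ / 2 - 1)) :=
  local_optimum_population_general μ
end

section
/- Let μ ≥ 4 be even and let P be the population (as a multiset of vectors in {0,1}^8) with one copy each of V1 = {v1,v2,v7,v8} and V2 = {v2,v4,v5,v6} and μ/2 - 1 copies each of V3 = {v1,v2,v3,v4} and V4 = {v5,v6,v7,v8}; let Q be the population with μ/2 copies each of V3 and V4. Then D(P) < D(Q), where D is the total Hamming distance. -/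
/-!
`V4` is the complement of `V3`, so a pair `V3, V4` adds one one-bit and one zero-bit in every
position. Adding `ν` such pairs to a population of size `c` thus raises its total Hamming distance
by `8 ν (c + ν)`. Hence `D(Q) = 8 (ν + 1)²` while `D(P) = D({V1, V2}) + 8 ν (ν + 2) = 8 (ν + 1)² - 2`.
-/

theorem Multiset.countP_replicate {α : Type*} (p : α → Prop) [DecidablePred p] (n : ℕ) (a : α) :
    (Multiset.replicate n a).countP p = if p a then n else 0 := by
  rw [← Multiset.coe_replicate, Multiset.coe_countP, List.countP_replicate]
  simp only [decide_eq_true_eq]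

theorem ones_add_replicate_compl (P : Multiset (Fin 8 → Bool)) (x : Fin 8 → Bool) (ν : ℕ)
    (i : Fin 8) :
    ones (P + Multiset.replicate ν x + Multiset.replicate ν (fun j => !x j)) i = ones P i + ν := by
  simp only [ones, Multiset.countP_add, Multiset.countP_replicate]
  by_cases hx : x i <;> simp [hx]

theorem ones_le_card (P : Multiset (Fin 8 → Bool)) (i : Fin 8) : ones P i ≤ Multiset.card P :=
  Multiset.countP_le_card _ _

theorem totalHD_add_replicate_compl (P : Multiset (Fin 8 → Bool)) (x : Fin 8 → Bool) (ν : ℕ) :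
    totalHD (P + Multiset.replicate ν x + Multiset.replicate ν (fun j => !x j)) =
      totalHD P + 8 * (ν * (Multiset.card P + ν)) := by
  simp only [totalHD, ones_add_replicate_compl, Multiset.card_add, Multiset.card_replicate]
  rw [show 8 * (ν * (Multiset.card P + ν)) = ∑ _i : Fin 8, ν * (Multiset.card P + ν) by simp,
    ← Finset.sum_add_distrib]
  refine Finset.sum_congr rfl fun i _ => ?_
  obtain ⟨k, hk⟩ := Nat.exists_eq_add_of_le (ones_le_card P i)
  rw [hk, show ones P i + k + ν + ν - (ones P i + ν) = k + ν by omega, Nat.add_sub_cancel_left]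
  ring

theorem totalHD_replicate_add_replicate_compl (x : Fin 8 → Bool) (m : ℕ) :
    totalHD (Multiset.replicate m x + Multiset.replicate m (fun j => !x j)) = 8 * m ^ 2 := by
  simpa [sq, totalHD, ones] using totalHD_add_replicate_compl 0 x m

theorem chi_V4 : chi V4 = fun j => !chi V3 j := by decide

theorem totalHD_V1_V2 : totalHD {chi V1, chi V2} = 6 := by decide

theorem suboptimal_diversity_general (μ : ℕ) (hμ : 4 ≤ μ) :
    totalHD (pop (μ / 2 - 1)) <
      totalHD (Multiset.replicate (μ / 2) (chi V3) + Multiset.replicate (μ / 2) (chi V4)) := by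
  obtain ⟨ν, hν⟩ : ∃ ν, μ / 2 = ν + 1 := ⟨μ / 2 - 1, by omega⟩
  rw [hν, Nat.add_sub_cancel, pop, chi_V4, totalHD_add_replicate_compl, totalHD_V1_V2,
    totalHD_replicate_add_replicate_compl]
  simp only [Multiset.insert_eq_cons, Multiset.card_cons, Multiset.card_singleton]
  nlinarith

/-- For even `μ ≥ 4`, the population `P` (one copy each of `V1`, `V2`, and `μ/2 - 1` copies
each of `V3`, `V4`) has strictly smaller total Hamming distance than the population `Q`
with `μ/2` copies each of `V3` and `V4`. -/
theorem suboptimal_diversity (μ : ℕ) (hμ : 4 ≤ μ) (heven : Even μ) :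
    totalHD (pop (μ / 2 - 1)) <
      totalHD (Multiset.replicate (μ / 2) (chi V3) + Multiset.replicate (μ / 2) (chi V4)) :=
  suboptimal_diversity_general μ hμ
end

section
/- Let G be a graph, x a vertex cover of G with |x| ≤ k, and y a non-excessive vertex cover of G (i.e., no proper subset of y is a vertex cover). Then (x \ (x \ y)) ∪ N(x \ y) = y, where N(S) is the set of all neighbors of vertices in S. -/
/-- Branson–Sutton repair lemma: if `x` is a vertex cover with `|x| ≤ k` and `y` is a
non-excessive vertex cover (no vertex can be removed from `y` keeping it a cover), then
removing `x \ y` from `x` and adding all neighbours of the removed vertices yields `y`: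
`(x \ (x \ y)) ∪ N(x \ y) = y`. -/
theorem jump_and_repair_set {V : Type*} (G : SimpleGraph V) (k : ℕ) (x y : Set V)
    (hx : ∀ u w, G.Adj u w → u ∈ x ∨ w ∈ x)
    (hxk : x.ncard ≤ k)
    (hy : ∀ u w, G.Adj u w → u ∈ y ∨ w ∈ y)
    (hyne : ∀ v ∈ y, ¬ (∀ u w, G.Adj u w → u ∈ y \ {v} ∨ w ∈ y \ {v})) :
    (x \ (x \ y)) ∪ {u | ∃ v ∈ x \ y, G.Adj u v} = y := by
  ext a
  constructor
  · rintro (⟨hax, han⟩ | ⟨v, ⟨hvx, hvy⟩, hadj⟩)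
    · by_contra hay
      exact han ⟨hax, hay⟩
    · rcases hy a v hadj with h | h
      · exact h
      · exact absurd h hvy
  · intro hay
    have := hyne a hay
    push_neg at this
    obtain ⟨u, w, hadj, hu, hw⟩ := this
    -- one of u, w is in y, and not in y \ {a}
    have key : ∃ z, G.Adj a z ∧ z ∉ y := by
      rcases hy u w hadj with h | h
      · have hua : u = a := by
          by_contra hne
          exact hu ⟨h, hne⟩
        refine ⟨w, hua ▸ hadj, fun hwy => ?_⟩
        have hwa : w = a := by
          by_contra hne
          exact hw ⟨hwy, hne⟩
        rw [hua, hwa] at hadj; exact G.loopless.irrefl a hadj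
      · have hwa : w = a := by
          by_contra hne
          exact hw ⟨h, hne⟩
        refine ⟨u, hwa ▸ hadj.symm, fun huy => ?_⟩
        have hua : u = a := by
          by_contra hne
          exact hu ⟨huy, hne⟩
        rw [hua, hwa] at hadj; exact G.loopless.irrefl a hadj
    obtain ⟨z, hadj, hzy⟩ := key
    rcases hx a z hadj with h | h
    · exact Or.inl ⟨h, fun ⟨_, hny⟩ => hny hay⟩
    · exact Or.inr ⟨z, ⟨h, hzy⟩, hadj⟩
end

section
/- Let x be a vertex cover with |x| ≤ k and y a non-excessive vertex cover of a graph G. If each vertex of x is independently removed with probability 1/2 (forming removed set S) and then all neighbors of vertices in S are added to x \ S, the probability that the resulting set equals y is at least 2^{-k}; it equals 2^{-|x|}. -/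
open Finset

/-!
Non-excessiveness of `y` means every `v ∈ y` has a neighbour outside `y` (otherwise `y.erase v`
would still be a cover). Hence a removed vertex can never lie in `y`, since its outside
neighbour would be added, and a kept vertex must lie in `y`; so the only successful removal set
is `S = x \ y`. Conversely `S = x \ y` succeeds because both `x` and `y` are covers. Exactly one
of the `2^|x|` equally likely outcomes produces `y`.
-/

namespace SimpleGraph

variable {V : Type*} {G : SimpleGraph V}

theorem IsVertexCover.exists_adj_notMem_of_not_isVertexCover_diff {c : Set V}
    (hc : G.IsVertexCover c) {v : V} (hv : v ∈ c) (hmin : ¬ G.IsVertexCover (c \ {v})) :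
    ∃ w, G.Adj v w ∧ w ∉ c := by
  simp only [IsVertexCover, Set.mem_sdiff, Set.mem_singleton_iff] at hmin
  push Not at hmin
  obtain ⟨u, w, huw, hu, hw⟩ := hmin
  rcases hc huw with hu' | hw'
  · obtain rfl : u = v := by tauto
    exact ⟨w, huw, fun hw' => huw.ne (by tauto)⟩
  · obtain rfl : w = v := by tauto
    exact ⟨u, huw.symm, fun hu' => huw.ne (by tauto)⟩

variable [DecidableEq V] [G.LocallyFinite]

def jumpRepair (G : SimpleGraph V) [G.LocallyFinite] (x S : Finset V) : Finset V :=
  (x \ S) ∪ S.biUnion fun v => G.neighborFinset v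

theorem mem_jumpRepair {x S : Finset V} {v : V} :
    v ∈ G.jumpRepair x S ↔ (v ∈ x ∧ v ∉ S) ∨ ∃ u ∈ S, G.Adj u v := by
  simp [jumpRepair]

variable {x y : Finset V}

theorem jumpRepair_sdiff_eq (hx : G.IsVertexCover x) (hy : G.IsVertexCover y)
    (hout : ∀ v ∈ y, ∃ w, G.Adj v w ∧ w ∉ y) : G.jumpRepair x (x \ y) = y := by
  ext v
  simp only [mem_jumpRepair, mem_sdiff, not_and, not_not]
  constructor
  · rintro (⟨hvx, hvy⟩ | ⟨u, ⟨-, huy⟩, huv⟩)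
    · exact hvy hvx
    · exact (hy huv).resolve_left huy
  · intro hvy
    obtain ⟨w, hvw, hwy⟩ := hout v hvy
    rcases hx hvw with hvx | hwx
    · exact Or.inl ⟨hvx, fun _ => hvy⟩
    · exact Or.inr ⟨w, ⟨hwx, hwy⟩, hvw.symm⟩

theorem eq_sdiff_of_jumpRepair_eq {S : Finset V} (hS : S ⊆ x)
    (hout : ∀ v ∈ y, ∃ w, G.Adj v w ∧ w ∉ y) (h : G.jumpRepair x S = y) : S = x \ y := by
  subst h
  ext v
  constructor
  · intro hvS
    refine mem_sdiff.2 ⟨hS hvS, fun hv => ?_⟩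
    obtain ⟨w, hvw, hw⟩ := hout v hv
    exact hw (mem_jumpRepair.2 (Or.inr ⟨v, hvS, hvw⟩))
  · intro hv
    rw [mem_sdiff] at hv
    by_contra hvS
    exact hv.2 (mem_jumpRepair.2 (Or.inl ⟨hv.1, hvS⟩))

theorem filter_jumpRepair_eq (hx : G.IsVertexCover x) (hy : G.IsVertexCover y)
    (hout : ∀ v ∈ y, ∃ w, G.Adj v w ∧ w ∉ y) :
    x.powerset.filter (fun S => G.jumpRepair x S = y) = {x \ y} := by
  ext S
  simp only [mem_filter, mem_powerset, mem_singleton]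
  constructor
  · exact fun ⟨hS, h⟩ => eq_sdiff_of_jumpRepair_eq hS hout h
  · rintro rfl
    exact ⟨sdiff_subset, jumpRepair_sdiff_eq hx hy hout⟩

end SimpleGraph

open SimpleGraph in
/-- If each vertex of a cover `x` (with `|x| ≤ k`) is removed independently with probability
`1/2` (the removed set `S` being uniform over subsets of `x`) and all neighbours of removed
vertices are added to `x \ S`, then the probability that the result equals a given
non-excessive cover `y` equals `2^{-|x|}`, and hence is at least `2^{-k}`. -/
theorem jump_and_repair_probability {V : Type*} [Fintype V] [DecidableEq V]
    (G : SimpleGraph V) [DecidableRel G.Adj] (k : ℕ) (x y : Finset V)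
    (hx : ∀ u w, G.Adj u w → u ∈ x ∨ w ∈ x)
    (hxk : x.card ≤ k)
    (hy : ∀ u w, G.Adj u w → u ∈ y ∨ w ∈ y)
    (hyne : ∀ v ∈ y, ¬ (∀ u w, G.Adj u w → u ∈ y.erase v ∨ w ∈ y.erase v)) :
    ((x.powerset.filter
        (fun S => (x \ S) ∪ S.biUnion (fun v => G.neighborFinset v) = y)).card : ℝ)
          / 2 ^ x.card
      = (1 / 2 : ℝ) ^ x.card ∧
    (1 / 2 : ℝ) ^ k ≤
      ((x.powerset.filter
        (fun S => (x \ S) ∪ S.biUnion (fun v => G.neighborFinset v) = y)).card : ℝ)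
          / 2 ^ x.card := by
  have hxc : G.IsVertexCover x := fun u w => hx u w
  have hyc : G.IsVertexCover y := fun u w => hy u w
  have hout : ∀ v ∈ y, ∃ w, G.Adj v w ∧ w ∉ y := fun v hv =>
    hyc.exists_adj_notMem_of_not_isVertexCover_diff hv
      (by simpa [IsVertexCover, ← coe_erase] using hyne v hv)
  have hprob : ((x.powerset.filter (fun S => G.jumpRepair x S = y)).card : ℝ) / 2 ^ x.card
      = (1 / 2 : ℝ) ^ x.card := by
    rw [filter_jumpRepair_eq hxc hyc hout, card_singleton, Nat.cast_one, one_div_pow]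
  exact ⟨hprob, hprob ▸ pow_le_pow_of_le_one (by norm_num) (by norm_num) hxk⟩
end
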